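/- Let f_{2k,α}(y) = (α/2)(1−2y) + (1−α)·Σ_{r=k+1}^{2k} C(2k,r)·(y^r(1−y)^{2k−r+1} − (1−y)^r y^{2k−r+1}). Then the derivative satisfies f'_{2k,α}(y) = −1 + (1−α)(2k+1)·C(2k,k)·y^k(1−y)^k for all y ∈ ℝ, where C(m,r) denotes the binomial coefficient. -/

import Mathlib

/-!
With `B n ν` the Bernstein polynomials and `M y = ∑_{r > k} B (2k) r y` the probability that a
strict majority of `2k` independent `y`-coins come up heads, the sum in `f2k` is
`(1 - y) M y - y M (1 - y)`. The symmetry `B n ν (1 - y) = B n (n - ν) y` and the partition of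
unity `∑ ν, B n ν = 1` give `M (1 - y) = 1 - B (2k) k y - M y`, so
`f2k k α y = α / 2 - y + (1 - α) (M y + y B (2k) k y)`. The derivative of `M` telescopes to
`2k B (2k-1) k`, and Pascal's rule for Bernstein polynomials then turns
`M' + (X B (2k) k)'` into `(2k + 1) B (2k) k`.
-/

open Finset

/-- The limiting drift function of the `2k`-choices dynamics with node failures
on the complete graph, with failure probability `α`. -/
noncomputable def f2k (k : ℕ) (α y : ℝ) : ℝ :=
  (α/2) * (1-2*y) + (1-α) * ∑ r ∈ Finset.Icc (k+1) (2*k),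
    (Nat.choose (2*k) r : ℝ) * (y^r * (1-y)^(2*k-r+1) - (1-y)^r * y^(2*k-r+1))

open Polynomial

namespace bernsteinPolynomial

variable {R : Type*} [CommRing R]

theorem succ_succ (n ν : ℕ) :
    bernsteinPolynomial R (n + 1) (ν + 1) =
      (1 - X) * bernsteinPolynomial R n (ν + 1) + X * bernsteinPolynomial R n ν := by
  simp only [bernsteinPolynomial, Nat.choose_succ_succ', Nat.add_sub_add_right]
  rcases lt_or_ge ν n with hνn | hnν
  · obtain ⟨d, rfl⟩ := Nat.exists_eq_add_of_lt hνn
    rw [show ν + d + 1 - ν = d + 1 by omega, show ν + d + 1 - (ν + 1) = d by omega]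
    push_cast
    ring
  · rw [Nat.choose_eq_zero_of_lt (by omega : n < ν + 1), Nat.sub_eq_zero_of_le hnν]
    push_cast
    ring

theorem derivative_sum_Icc {m n : ℕ} (h : m ≤ n) :
    derivative (∑ ν ∈ Icc (m + 1) n, bernsteinPolynomial R n ν) =
      n * bernsteinPolynomial R (n - 1) m := by
  rw [← Ico_add_one_right_eq_Icc, ← sum_Ico_add', derivative_sum]
  have telescope : ∑ ν ∈ Ico m n,
      (bernsteinPolynomial R (n - 1) ν - bernsteinPolynomial R (n - 1) (ν + 1)) =
        bernsteinPolynomial R (n - 1) m - bernsteinPolynomial R (n - 1) n := by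
    rw [← neg_sub, ← sum_Ico_sub _ h, ← sum_neg_distrib]
    simp only [neg_sub]
  simp only [derivative_succ, ← mul_sum, telescope]
  rcases n with - | n
  · simp
  · rw [eq_zero_of_lt R (by omega : n + 1 - 1 < n + 1)]
    ring

end bernsteinPolynomial

section

variable (R : Type*) [CommRing R]

noncomputable def strictMajority (k : ℕ) : R[X] :=
  ∑ r ∈ Icc (k + 1) (2 * k), bernsteinPolynomial R (2 * k) r

theorem strictMajority_comp_one_sub_X (k : ℕ) :
    (strictMajority R k).comp (1 - X) =
      1 - bernsteinPolynomial R (2 * k) k - strictMajority R k := by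
  have reflect : (strictMajority R k).comp (1 - X) =
      ∑ ν ∈ range k, bernsteinPolynomial R (2 * k) ν := by
    rw [strictMajority, Polynomial.sum_comp]
    refine sum_nbij' (fun r ↦ 2 * k - r) (fun ν ↦ 2 * k - ν) ?_ ?_ ?_ ?_ ?_ <;>
      intro r hr <;> simp only [mem_Icc, mem_range] at hr ⊢
    · omega
    · omega
    · omega
    · omega
    · exact bernsteinPolynomial.flip R _ _ hr.2
  have split : ∑ ν ∈ range k, bernsteinPolynomial R (2 * k) ν + bernsteinPolynomial R (2 * k) k +
      strictMajority R k = 1 := by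
    rw [← bernsteinPolynomial.sum R (2 * k), ← sum_range_succ, strictMajority,
      ← Ico_add_one_right_eq_Icc, sum_range_add_sum_Ico _ (by omega)]
  rw [reflect, ← split]
  ring

theorem derivative_strictMajority_add_X_mul (k : ℕ) :
    derivative (strictMajority R k + X * bernsteinPolynomial R (2 * k) k) =
      (2 * (k : R[X]) + 1) * bernsteinPolynomial R (2 * k) k := by
  rcases k with - | j
  · simp [strictMajority, bernsteinPolynomial]
  · rw [strictMajority, derivative_add, derivative_mul, derivative_X, one_mul,
      bernsteinPolynomial.derivative_sum_Icc (by omega), bernsteinPolynomial.derivative_succ,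
      show 2 * (j + 1) - 1 = 2 * j + 1 by omega, show 2 * (j + 1) = 2 * j + 1 + 1 by omega,
      bernsteinPolynomial.succ_succ (2 * j + 1) j]
    push_cast
    ring

end

theorem f2k_eq_strictMajority (k : ℕ) (α y : ℝ) :
    f2k k α y = α / 2 - y +
      (1 - α) * (strictMajority ℝ k + X * bernsteinPolynomial ℝ (2 * k) k).eval y := by
  have summand (r : ℕ) :
      (Nat.choose (2 * k) r : ℝ) *
          (y ^ r * (1 - y) ^ (2 * k - r + 1) - (1 - y) ^ r * y ^ (2 * k - r + 1)) =
        (1 - y) * (bernsteinPolynomial ℝ (2 * k) r).eval y -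
          y * (bernsteinPolynomial ℝ (2 * k) r).eval (1 - y) := by
    simp only [bernsteinPolynomial, eval_mul, eval_pow, eval_natCast, eval_sub, eval_one, eval_X]
    ring
  have hcomp := congrArg (eval y) (strictMajority_comp_one_sub_X ℝ k)
  simp only [eval_comp, eval_sub, eval_one, eval_X] at hcomp
  rw [f2k, sum_congr rfl fun r _ ↦ summand r, sum_sub_distrib, ← mul_sum, ← mul_sum,
    ← eval_finsetSum, ← eval_finsetSum, ← strictMajority, hcomp]
  simp only [eval_add, eval_mul, eval_X]
  ring

theorem stmt_18_general (k : ℕ) (α : ℝ) (y : ℝ) :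
    HasDerivAt (f2k k α)
      (-1 + (1-α) * (2*k+1) * (Nat.choose (2*k) k : ℝ) * y^k * (1-y)^k) y := by
  have hpoly := (strictMajority ℝ k + X * bernsteinPolynomial ℝ (2 * k) k).hasDerivAt y
  rw [derivative_strictMajority_add_X_mul] at hpoly
  have hf := ((hasDerivAt_id' y).const_sub (α / 2)).add (hpoly.const_mul (1 - α))
  rw [show f2k k α = _ from funext (f2k_eq_strictMajority k α)]
  refine hf.congr_deriv ?_
  simp only [bernsteinPolynomial, eval_mul, eval_add, eval_pow, eval_natCast, eval_sub,
    eval_one, eval_X, two_mul, Nat.add_sub_cancel]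
  ring

/-- **Derivative of the `2k`-choices drift function.**
`f'_{2k,α}(y) = −1 + (1−α)(2k+1) C(2k,k) yᵏ(1−y)ᵏ`. -/
theorem stmt_18 (k : ℕ) (hk : 1 ≤ k) (α : ℝ) (hα : α ∈ Set.Ioo (0:ℝ) 1) (y : ℝ) :
    HasDerivAt (f2k k α)
      (-1 + (1-α) * (2*k+1) * (Nat.choose (2*k) k : ℝ) * y^k * (1-y)^k) y :=
  stmt_18_general k α y
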